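/- For n ≥ 3, if λₙ > 1 is the real root of Xⁿ − X^{n−1} − ⋯ − X − 1 = 0, then the field ℚ(λₙ + λₙ⁻¹) is not totally real. -/

import Mathlib

open Polynomial Finset

/-- For a real algebraic number `x`, `ℚ(x)` is totally real iff every complex root of the
minimal polynomial of `x` over `ℚ` is real. -/
def AdjoinIsTotallyReal (x : ℝ) : Prop :=
  ∀ z : ℂ, Polynomial.aeval z (minpoly ℚ x) = 0 → z.im = 0

/-!
Let `P = Xⁿ - Xⁿ⁻¹ - ⋯ - 1`. Since `(X - 1) P = X ^ (n + 1) - 2 Xⁿ + 1`, every root `z` of `P`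
satisfies `zⁿ (2 - z) = 1`; on the unit circle this forces `|2 - z| = 1`, hence `z = 1`. Pulling
back the minimal polynomial of `λ + λ⁻¹` along `X + X⁻¹` shows that `δ + δ⁻¹` is a conjugate of
`λ + λ⁻¹` for every conjugate `δ` of `λ`, and `Im (δ + δ⁻¹) = Im δ · (1 - |δ|⁻²)` is nonzero when
`δ` is not real. So it suffices that `λ` has a non-real conjugate.

If all conjugates of `λ` were real, they would be `λ`, the only positive root of `P`, and at
most one root `β ∈ (-1, 0)`, because `u ↦ uⁿ (2 + u)` is increasing. The norm of the algebraic
integer `λ` is an integer whose absolute value, `λ` or `λ |β|`, lies in `(0, 2)`; so it is `±1`,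
which excludes `1 < λ` and leaves `λ |β| = 1`. Then `β = -λ⁻¹` and `λⁿ (2 - λ) = 1` give `λ² = λ + 1 = λⁿ`, impossible for `n ≥ 3`.
-/

noncomputable def multinacciPoly (R : Type*) [CommRing R] (n : ℕ) : R[X] :=
  X ^ n - ∑ i ∈ range n, X ^ i

theorem multinacciPoly_monic (R : Type*) [CommRing R] [Nontrivial R] (n : ℕ) :
    (multinacciPoly R n).Monic := by
  refine monic_X_pow_sub ((degree_sum_le _ _).trans_lt ?_)
  rw [Finset.sup_lt_iff (by exact_mod_cast WithBot.bot_lt_coe n)]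
  intro i hi
  rw [degree_X_pow]
  exact_mod_cast mem_range.1 hi

theorem aeval_multinacciPoly_eq_zero_iff {R A : Type*} [CommRing R] [CommRing A] [Algebra R A]
    {n : ℕ} {x : A} : aeval x (multinacciPoly R n) = 0 ↔ x ^ n = ∑ i ∈ range n, x ^ i := by
  simp [multinacciPoly, sub_eq_zero]

theorem pow_eq_geom_sum_of_aeval_minpoly_eq_zero {F A B : Type*} [Field F] [CommRing A]
    [CommRing B] [Algebra F A] [Algebra F B] {n : ℕ} {x : A} {y : B}
    (hx : x ^ n = ∑ i ∈ range n, x ^ i) (hy : aeval y (minpoly F x) = 0) :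
    y ^ n = ∑ i ∈ range n, y ^ i :=
  aeval_multinacciPoly_eq_zero_iff.1 <| aeval_eq_zero_of_dvd_aeval_eq_zero
    (minpoly.dvd F x (aeval_multinacciPoly_eq_zero_iff.2 hx)) hy

theorem IsIntegral.of_pow_eq_geom_sum {A : Type*} [CommRing A] {n : ℕ} {x : A}
    (hx : x ^ n = ∑ i ∈ range n, x ^ i) : IsIntegral ℤ x :=
  ⟨multinacciPoly ℤ n, multinacciPoly_monic ℤ n, aeval_multinacciPoly_eq_zero_iff.2 hx⟩

theorem pow_mul_two_sub_eq_one {R : Type*} [CommRing R] {n : ℕ} {x : R}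
    (hx : x ^ n = ∑ i ∈ range n, x ^ i) : x ^ n * (2 - x) = 1 := by
  linear_combination (1 - x) * hx - geom_sum_mul x n

section Ordered

variable {K : Type*} [Field K] [LinearOrder K] [IsStrictOrderedRing K]

theorem geom_sum_lt_pow_of_lt {n : ℕ} (hn : n ≠ 0) {x y : K} (hx : 0 < x) (hxy : x < y)
    (h : ∑ i ∈ range n, x ^ i ≤ x ^ n) : ∑ i ∈ range n, y ^ i < y ^ n := by
  set t := y / x
  have ht : 1 < t := (one_lt_div hx).2 hxy
  have hy : ∀ i, y ^ i = t ^ i * x ^ i := fun i => by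
    rw [← mul_pow, div_mul_cancel₀ y hx.ne']
  calc ∑ i ∈ range n, y ^ i = ∑ i ∈ range n, t ^ i * x ^ i := by simp only [hy]
    _ < ∑ i ∈ range n, t ^ n * x ^ i := by
      refine sum_lt_sum_of_nonempty (nonempty_range_iff.2 hn) fun i hi => ?_
      exact mul_lt_mul_of_pos_right (pow_lt_pow_right₀ ht (mem_range.1 hi)) (pow_pos hx i)
    _ = t ^ n * ∑ i ∈ range n, x ^ i := (mul_sum _ _ _).symm
    _ ≤ t ^ n * x ^ n := by gcongr
    _ = y ^ n := (hy n).symm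

theorem eq_of_pow_eq_geom_sum {n : ℕ} (hn : n ≠ 0) {x y : K} (hx : 0 < x) (hy : 0 < y)
    (hxn : x ^ n = ∑ i ∈ range n, x ^ i) (hyn : y ^ n = ∑ i ∈ range n, y ^ i) : x = y := by
  rcases lt_trichotomy x y with hxy | hxy | hxy
  · exact absurd hyn (geom_sum_lt_pow_of_lt hn hx hxy hxn.ge).ne'
  · exact hxy
  · exact absurd hxn (geom_sum_lt_pow_of_lt hn hy hxy hyn.ge).ne'

theorem strictMonoOn_pow_mul_two_add (n : ℕ) :
    StrictMonoOn (fun u : K => u ^ n * (2 + u)) (Set.Ici 0) := by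
  intro u hu v _ huv
  exact mul_lt_mul' (pow_le_pow_left₀ hu huv.le n) (by linarith) (by linarith [hu.out])
    (pow_pos (hu.out.trans_lt huv) n)

theorem lt_one_of_pow_mul_two_add_eq_one {n : ℕ} {u : K} (hu : 0 ≤ u)
    (h : u ^ n * (2 + u) = 1) : u < 1 := by
  by_contra! hu1
  nlinarith [one_le_pow₀ (n := n) hu1]

theorem eq_or_neg_of_pow_eq_geom_sum {n : ℕ} (hn : n ≠ 0) {lam x : K} (hlam : 0 < lam)
    (hlamn : lam ^ n = ∑ i ∈ range n, lam ^ i) (hxn : x ^ n = ∑ i ∈ range n, x ^ i) :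
    x = lam ∨ x < 0 ∧ |x| ^ n * (2 + |x|) = 1 := by
  have hx := pow_mul_two_sub_eq_one hxn
  rcases lt_trichotomy x 0 with hneg | rfl | hpos
  · refine Or.inr ⟨hneg, ?_⟩
    have habs := congrArg abs hx
    rw [abs_mul, abs_pow, abs_of_pos (by linarith : 0 < 2 - x), abs_one] at habs
    convert habs using 2
    rw [abs_of_neg hneg, sub_eq_add_neg]
  · simp [zero_pow hn] at hx
  · exact Or.inl (eq_of_pow_eq_geom_sum hn hpos hlam hxn hlamn)

theorem mul_ne_one_of_pow_mul_two_sub_eq_one {n : ℕ} (hn : 3 ≤ n) {lam u : K} (hlam : 1 < lam)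
    (hlamn : lam ^ n * (2 - lam) = 1) (hu : u ^ n * (2 + u) = 1) : lam * u ≠ 1 := by
  intro hlamu
  have hsucc : lam ^ (n + 1) = 2 * lam + 1 :=
    calc lam ^ (n + 1) = lam ^ (n + 1) * (u ^ n * (2 + u)) := by rw [hu, mul_one]
      _ = (lam * u) ^ n * (2 * lam + lam * u) := by ring
      _ = 2 * lam + 1 := by rw [hlamu, one_pow, one_mul]
  have hpow : lam ^ n = lam + 1 := by linear_combination (hlamn + hsucc) / 2
  have hsq : lam ^ 2 = lam ^ n := by linear_combination hsucc - (1 + lam) * hpow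
  exact (pow_lt_pow_right₀ hlam (by omega : 2 < n)).ne hsq

end Ordered

theorem Complex.im_add_inv (z : ℂ) : (z + z⁻¹).im = z.im * (1 - (normSq z)⁻¹) := by
  rw [add_im, inv_im]
  ring

theorem Complex.eq_one_of_normSq_eq_one_of_normSq_two_sub_eq_one {z : ℂ}
    (h : normSq z = 1) (h' : normSq (2 - z) = 1) : z = 1 := by
  simp only [normSq_apply, sub_re, sub_im, re_ofNat, im_ofNat] at h h'
  exact Complex.ext_iff.2 ⟨by rw [one_re]; nlinarith, by rw [one_im]; nlinarith⟩

theorem Complex.eq_one_of_pow_mul_two_sub_eq_one {n : ℕ} {z : ℂ} (hz : z ^ n * (2 - z) = 1)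
    (h : normSq z = 1) : z = 1 :=
  eq_one_of_normSq_eq_one_of_normSq_two_sub_eq_one h (by simpa [h] using congrArg normSq hz)

noncomputable def joukowskiNumerator {R : Type*} [CommSemiring R] (q : R[X]) : R[X] :=
  ∑ i ∈ range (q.natDegree + 1), C (q.coeff i) * (X ^ 2 + 1) ^ i * X ^ (q.natDegree - i)

theorem aeval_joukowskiNumerator {R K : Type*} [CommSemiring R] [Field K] [Algebra R K]
    (q : R[X]) {x : K} (hx : x ≠ 0) :
    aeval x (joukowskiNumerator q) = x ^ q.natDegree * aeval (x + x⁻¹) q := by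
  rw [aeval_eq_sum_range (p := q), mul_sum, joukowskiNumerator, map_sum]
  refine sum_congr rfl fun i hi => ?_
  have hsq : x ^ 2 + 1 = (x + x⁻¹) * x := by field_simp
  have hpow : x ^ q.natDegree = x ^ i * x ^ (q.natDegree - i) := by
    rw [← pow_add, Nat.add_sub_cancel' (Nat.lt_succ_iff.1 (mem_range.1 hi))]
  simp only [map_mul, map_pow, map_add, map_one, aeval_X, aeval_C, Algebra.smul_def]
  rw [hsq, mul_pow, hpow]
  ring

theorem aeval_add_inv_minpoly_add_inv_eq_zero {F A B : Type*} [Field F] [Field A] [Field B]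
    [Algebra F A] [Algebra F B] {x : A} (hx : x ≠ 0) {y : B} (hy : y ≠ 0)
    (hxy : aeval y (minpoly F x) = 0) : aeval (y + y⁻¹) (minpoly F (x + x⁻¹)) = 0 := by
  have hx' : aeval x (joukowskiNumerator (minpoly F (x + x⁻¹))) = 0 := by
    rw [aeval_joukowskiNumerator _ hx, minpoly.aeval, mul_zero]
  have hy' := aeval_eq_zero_of_dvd_aeval_eq_zero (minpoly.dvd F x hx') hxy
  rw [aeval_joukowskiNumerator _ hy] at hy'
  exact (mul_eq_zero.1 hy').resolve_left (pow_ne_zero _ hy)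

theorem AdjoinIsTotallyReal.of_add_inv {x : ℝ} (hx : x ≠ 0)
    (hcircle : ∀ z : ℂ, aeval z (minpoly ℚ x) = 0 → Complex.normSq z = 1 → z.im = 0)
    (h : AdjoinIsTotallyReal (x + x⁻¹)) : AdjoinIsTotallyReal x := by
  intro z hz
  by_contra him
  have hz0 : z ≠ 0 := by
    rintro rfl
    exact him rfl
  have hconj := h _ (aeval_add_inv_minpoly_add_inv_eq_zero hx hz0 hz)
  rw [Complex.im_add_inv] at hconj
  exact mul_ne_zero him (sub_ne_zero.2 (inv_ne_one.2 fun h1 => him (hcircle z hz h1)).symm) hconj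

theorem exists_int_abs_eq_prod_norm_aroots_minpoly {A : Type*} [Field A] [Algebra ℚ A] {x : A}
    (hx : IsIntegral ℤ x) :
    ∃ k : ℤ, |(k : ℝ)| = ∏ z ∈ ((minpoly ℚ x).aroots ℂ).toFinset, ‖z‖ := by
  have hxℚ : IsIntegral ℚ x := hx.tower_top
  have hnodup : ((minpoly ℚ x).aroots ℂ).Nodup :=
    nodup_roots (minpoly.irreducible hxℚ).separable.map
  have hmin := minpoly.isIntegrallyClosed_eq_field_fractions' ℚ hx
  have hcoeff := Splits.coeff_zero_eq_prod_roots_of_monic (IsAlgClosed.splits _)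
    ((minpoly.monic hxℚ).map (algebraMap ℚ ℂ))
  rw [coeff_map, hmin, coeff_map, ← hmin] at hcoeff
  refine ⟨(minpoly ℤ x).coeff 0, ?_⟩
  rw [← norm_prod, prod_eq_multiset_prod, Multiset.toFinset_val, hnodup.dedup, Multiset.map_id']
  simpa using congrArg norm hcoeff

theorem abs_intCast_eq_one_of_lt_two {k : ℤ} (h0 : 0 < |(k : ℝ)|) (h2 : |(k : ℝ)| < 2) :
    |(k : ℝ)| = 1 := by
  rw [← Int.cast_abs] at h0 h2 ⊢
  norm_cast at h0 h2 ⊢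
  omega

theorem prod_norm_aroots_minpoly_of_adjoinIsTotallyReal {n : ℕ} (hn : n ≠ 0) {lam : ℝ}
    (hlam : 0 < lam) (hroot : lam ^ n = ∑ i ∈ range n, lam ^ i) (hreal : AdjoinIsTotallyReal lam) :
    ∏ z ∈ ((minpoly ℚ lam).aroots ℂ).toFinset, ‖z‖ = lam ∨
      ∃ u : ℝ, 0 < u ∧ u ^ n * (2 + u) = 1 ∧
        ∏ z ∈ ((minpoly ℚ lam).aroots ℂ).toFinset, ‖z‖ = lam * u := by
  set T := ((minpoly ℚ lam).aroots ℂ).toFinset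
  have hmemT : ∀ z, z ∈ T ↔ aeval z (minpoly ℚ lam) = 0 := fun z => by
    simp [T, minpoly.ne_zero (IsIntegral.of_pow_eq_geom_sum hroot).tower_top]
  have hlamT : (lam : ℂ) ∈ T := (hmemT _).2 <| by
    simpa using aeval_algebraMap_apply ℂ lam (minpoly ℚ lam)
  have hrest : ∀ z ∈ T.erase (lam : ℂ),
      z = z.re ∧ z.re < 0 ∧ |z.re| ^ n * (2 + |z.re|) = 1 := by
    intro z hz
    obtain ⟨hne, hzT⟩ := mem_erase.1 hz
    have hz_re : z = z.re := Complex.ext rfl (hreal z ((hmemT z).1 hzT))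
    have hzroot := pow_eq_geom_sum_of_aeval_minpoly_eq_zero hroot ((hmemT z).1 hzT)
    rw [hz_re] at hzroot
    norm_cast at hzroot
    rcases eq_or_neg_of_pow_eq_geom_sum hn hlam hroot hzroot with h | h
    · exact absurd (by rw [hz_re, h]) hne
    · exact ⟨hz_re, h⟩
  have hcard : (T.erase (lam : ℂ)).card ≤ 1 := card_le_one.2 fun z hz w hw => by
    obtain ⟨hz, hz0, hzu⟩ := hrest z hz
    obtain ⟨hw, hw0, hwu⟩ := hrest w hw
    have := (strictMonoOn_pow_mul_two_add n).injOn (abs_nonneg z.re) (abs_nonneg w.re)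
      (hzu.trans hwu.symm)
    rw [abs_of_neg hz0, abs_of_neg hw0, neg_inj] at this
    rw [hz, hw, this]
  rw [← mul_prod_erase T _ hlamT, Complex.norm_real, Real.norm_of_nonneg hlam.le]
  rcases Nat.le_one_iff_eq_zero_or_eq_one.1 hcard with h0 | h1
  · rw [card_eq_zero.1 h0, prod_empty, mul_one]
    exact Or.inl rfl
  · obtain ⟨β, hβ⟩ := card_eq_one.1 h1
    obtain ⟨hβre, hβneg, hβu⟩ := hrest β (hβ ▸ mem_singleton_self β)
    rw [hβ, prod_singleton, hβre, Complex.norm_real, Real.norm_eq_abs]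
    exact Or.inr ⟨|β.re|, abs_pos.2 hβneg.ne, hβu, rfl⟩

theorem not_adjoinIsTotallyReal_of_pow_eq_geom_sum {n : ℕ} (hn : 3 ≤ n) {lam : ℝ}
    (hlam : 1 < lam) (hroot : lam ^ n = ∑ i ∈ range n, lam ^ i) : ¬ AdjoinIsTotallyReal lam := by
  intro hreal
  have hlam2 : lam < 2 := by
    nlinarith [pow_mul_two_sub_eq_one hroot, pow_pos (by linarith : 0 < lam) n]
  obtain ⟨k, hk⟩ := exists_int_abs_eq_prod_norm_aroots_minpoly (IsIntegral.of_pow_eq_geom_sum hroot)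
  rcases prod_norm_aroots_minpoly_of_adjoinIsTotallyReal (by omega) (by linarith) hroot hreal
    with hprod | ⟨u, hu0, hu, hprod⟩
  · rw [hprod] at hk
    linarith [abs_intCast_eq_one_of_lt_two (k := k) (by linarith) (by linarith)]
  · rw [hprod] at hk
    refine mul_ne_one_of_pow_mul_two_sub_eq_one hn hlam (pow_mul_two_sub_eq_one hroot) hu ?_
    rw [← hk]
    exact abs_intCast_eq_one_of_lt_two (by rw [hk]; positivity) (by
      rw [hk]; nlinarith [lt_one_of_pow_mul_two_add_eq_one hu0.le hu])

theorem arnoux_yoccoz_trace_field_not_totally_real (n : ℕ) (hn : 3 ≤ n)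
    (lam : ℝ) (hlam : 1 < lam)
    (hroot : ((X : ℝ[X]) ^ n - ∑ i ∈ Finset.range n, (X : ℝ[X]) ^ i).eval lam = 0) :
    ¬ AdjoinIsTotallyReal (lam + lam⁻¹) := by
  intro hTR
  have hlamn : lam ^ n = ∑ i ∈ range n, lam ^ i := by simpa [sub_eq_zero] using hroot
  refine not_adjoinIsTotallyReal_of_pow_eq_geom_sum hn hlam hlamn
    (hTR.of_add_inv (by positivity) fun z hz hz1 => ?_)
  have hz := pow_mul_two_sub_eq_one (pow_eq_geom_sum_of_aeval_minpoly_eq_zero hlamn hz)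
  rw [Complex.eq_one_of_pow_mul_two_sub_eq_one hz hz1, Complex.one_im]
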